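/- Termwise identity underlying the Φ̃₃ recursion: for all real b, c, w, z, one has (b−1)·w·Φ̃₃(b,c;w,z) = Φ̃₃(b−1,c−2;w,z) − (c−2)·Φ̃₃(b−1,c−1;w,z) − z·Φ̃₃(b−1,c;w,z) (no division required, valid even when b = 1 or w = 0). -/

import Mathlib

open scoped BigOperators
open MeasureTheory

/-- Term of the double series defining the regularized Φ̃₃ function. -/
noncomputable def phi3Term (b c w z : ℝ) (k m : ℕ) : ℝ :=
  Polynomial.eval b (ascPochhammer ℝ k) * (Real.Gamma (c + k + m))⁻¹ *
    w ^ k * z ^ m / (Nat.factorial k * Nat.factorial m)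

/-- The regularized confluent hypergeometric function of two variables Φ̃₃. -/
noncomputable def Phi3 (b c w z : ℝ) : ℝ :=
  ∑' k : ℕ, ∑' m : ℕ, phi3Term b c w z k m

/-- Modified Bessel function of the first kind of integer order (I₋ₙ = Iₙ). -/
noncomputable def besselI (n : ℤ) (x : ℝ) : ℝ :=
  ∑' m : ℕ, (x / 2) ^ (2 * m + n.natAbs) /
    (Nat.factorial m * Nat.factorial (m + n.natAbs))

/-- Modified Bessel function of the first kind of real order. -/
noncomputable def besselIR (ν x : ℝ) : ℝ :=
  ∑' m : ℕ, (x / 2) ^ ((2 * m : ℝ) + ν) * (Real.Gamma ((m : ℝ) + ν + 1))⁻¹ /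
    Nat.factorial m

/-- Generalized Marcum-Q function of integer order. -/
noncomputable def marcumQ (m : ℤ) (a b : ℝ) : ℝ :=
  ∫ x in Set.Ioi b,
    x ^ m / a ^ (m - 1) * Real.exp (-(a ^ 2 + x ^ 2) / 2) * besselI (m - 1) (a * x)

/-- Generalized Marcum-Q function of real order. -/
noncomputable def marcumQR (m a b : ℝ) : ℝ :=
  ∫ x in Set.Ioi b,
    x ^ m / a ^ (m - 1) * Real.exp (-(a ^ 2 + x ^ 2) / 2) * besselIR (m - 1) (a * x)

/-- The polynomials A_i(b,c;z) in the Φ̃₃ reduction formula. -/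
noncomputable def Acoef (b : ℕ) (c z : ℝ) (i : ℕ) : ℝ :=
  ((-1 : ℝ) ^ (b - 1) / Nat.factorial (b - 1)) *
    ∑ k ∈ Finset.range (i / 2 + 1),
      (-1 : ℝ) ^ k * Polynomial.eval ((b : ℝ) - i + k) (ascPochhammer ℝ (i - k)) *
        Polynomial.eval (c - i - 1 + k) (ascPochhammer ℝ (i - 2 * k)) * z ^ k /
        (Nat.factorial (i - 2 * k) * Nat.factorial k)

/-!
Three relations between the terms `T b c k m := phi3Term b c w z k m` do all the work:
`T b (c - 2) k m = (c - 2 + k + m) T b (c - 1) k m` (the recurrence of `1 / Γ`),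
`z T b c k m = (m + 1) T b (c - 1) k (m + 1)` and
`(b - 1) w T b c k m = (k + 1) T (b - 1) (c - 1) (k + 1) m`.
By the first two, the `k`-th row of the right-hand side sums to
`∑ₘ (k + m) S k m - ∑ₘ (m + 1) S k (m + 1) = k ∑ₘ S k m` with `S = T (b - 1) (c - 1)`;
by the third, the `k`-th row of the left-hand side is the `(k + 1)`-st of these, so both sides
equal `∑ₖ k ∑ₘ S k m`. Every row, and the series of row sums, converges absolutely since
`xⁿ / Γ(c + n)` is summable for every `x` and `|(b)ₖ| ≤ (1 + |b|)ᵏ k!`.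
-/

theorem hasSum_of_hasSum_nat_succ {G : Type*} [AddCommGroup G] [TopologicalSpace G]
    [IsTopologicalAddGroup G] {f : ℕ → G} {a : G} (h0 : f 0 = 0)
    (h : HasSum (fun n => f (n + 1)) a) : HasSum f a := by
  simpa [h0] using (hasSum_nat_add_iff 1).mp h

theorem summable_pow_div_Gamma_add_nat (c x : ℝ) :
    Summable fun n : ℕ => x ^ n / Real.Gamma (c + n) := by
  refine summable_of_ratio_norm_eventually_le (r := 1 / 2) (by norm_num) ?_
  filter_upwards [Filter.eventually_ge_atTop ⌈2 * |x| + 1 - c⌉₊] with n hn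
  have hcn : 2 * |x| + 1 ≤ c + n := by linarith [(Nat.ceil_le).mp hn]
  have hpos : 0 < c + n := by linarith [abs_nonneg x]
  have hΓ : Real.Gamma (c + ↑(n + 1)) = (c + n) * Real.Gamma (c + n) := by
    rw [Nat.cast_succ, ← add_assoc, Real.Gamma_add_one hpos.ne']
  calc ‖x ^ (n + 1) / Real.Gamma (c + ↑(n + 1))‖
      = |x| / (c + n) * ‖x ^ n / Real.Gamma (c + n)‖ := by
        rw [hΓ, pow_succ, norm_div, norm_div, norm_mul, norm_mul, Real.norm_eq_abs x,
          Real.norm_of_nonneg hpos.le]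
        field_simp
    _ ≤ 1 / 2 * ‖x ^ n / Real.Gamma (c + n)‖ := by
        refine mul_le_mul_of_nonneg_right ?_ (norm_nonneg _)
        rw [div_le_iff₀ hpos]
        linarith

theorem abs_ascPochhammer_eval_le (b : ℝ) (k : ℕ) :
    |(ascPochhammer ℝ k).eval b| ≤ (1 + |b|) ^ k * k.factorial := by
  induction k with
  | zero => simp
  | succ k ih =>
    have hb : |b + k| ≤ (1 + |b|) * (k + 1) := by
      nlinarith [abs_add_le b k, abs_nonneg b, abs_of_nonneg (Nat.cast_nonneg (α := ℝ) k)]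
    rw [ascPochhammer_succ_eval, abs_mul, pow_succ, Nat.factorial_succ, Nat.cast_mul]
    calc |(ascPochhammer ℝ k).eval b| * |b + k|
        ≤ ((1 + |b|) ^ k * k.factorial) * ((1 + |b|) * (k + 1)) :=
          mul_le_mul ih hb (abs_nonneg _) (by positivity)
      _ = (1 + |b|) ^ k * (1 + |b|) * (↑(k + 1) * k.factorial) := by push_cast; ring

theorem ascPochhammer_succ_eval_sub_one (b : ℝ) (k : ℕ) :
    (ascPochhammer ℝ (k + 1)).eval (b - 1) = (b - 1) * (ascPochhammer ℝ k).eval b := by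
  simp [ascPochhammer_succ_left]

/-- Mathlib's `Γ` vanishes at its poles, so `(Γ x)⁻¹` is the entire function `1 / Γ` and this
holds for every `x`. -/
theorem inv_Gamma_eq_mul_inv_Gamma_add_one (x : ℝ) :
    (Real.Gamma x)⁻¹ = x * (Real.Gamma (x + 1))⁻¹ := by
  rcases eq_or_ne x 0 with rfl | hx
  · simp [Real.Gamma_zero]
  · rw [Real.Gamma_add_one hx, mul_inv, ← mul_assoc, mul_inv_cancel₀ hx, one_mul]

noncomputable def phi3Row (b c w z : ℝ) (k : ℕ) : ℝ :=
  ∑' m : ℕ, phi3Term b c w z k m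

section

variable (b c w z : ℝ) (k m : ℕ)

theorem phi3Term_eq_div_Gamma :
    phi3Term b c w z k m = (ascPochhammer ℝ k).eval b * w ^ k / k.factorial *
      (z ^ m / m.factorial) / Real.Gamma (c + k + m) := by
  rw [phi3Term]
  ring

theorem summable_phi3Term : Summable (phi3Term b c w z k) := by
  refine .of_norm_bounded
    ((summable_pow_div_Gamma_add_nat (c + k) z).norm.mul_left
      ‖(ascPochhammer ℝ k).eval b * w ^ k / k.factorial‖) fun m => ?_
  have hm : (1 : ℝ) ≤ m.factorial := by exact_mod_cast m.factorial_pos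
  rw [phi3Term_eq_div_Gamma, mul_div_assoc, norm_mul, div_right_comm, norm_div _ (m.factorial : ℝ),
    Real.norm_natCast]
  gcongr
  exact div_le_self (norm_nonneg _) hm

theorem norm_phi3Row_le (hck : 2 ≤ c + k) :
    ‖phi3Row b c w z k‖ ≤
      ((1 + |b|) * |w|) ^ k / Real.Gamma (c + k) * ∑' m : ℕ, |z| ^ m / m.factorial := by
  refine tsum_of_norm_bounded ((Real.summable_pow_div_factorial |z|).hasSum.mul_left _)
    fun m => ?_
  have hP : ‖(ascPochhammer ℝ k).eval b * w ^ k / k.factorial‖ ≤ ((1 + |b|) * |w|) ^ k := by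
    rw [Real.norm_eq_abs, abs_div, abs_mul, abs_pow, Nat.abs_cast, div_le_iff₀ (by positivity),
      mul_pow, mul_right_comm]
    gcongr
    exact abs_ascPochhammer_eval_le b k
  have hΓ : Real.Gamma (c + k) ≤ ‖Real.Gamma (c + k + m)‖ :=
    (Real.Gamma_strictMonoOn_Ici.monotoneOn hck
      (show 2 ≤ c + k + m by linarith [m.cast_nonneg (α := ℝ)])
      (le_add_of_nonneg_right m.cast_nonneg)).trans (Real.le_norm_self _)
  have hZ : ‖z ^ m / m.factorial‖ = |z| ^ m / m.factorial := by
    rw [norm_div, norm_pow, Real.norm_eq_abs, Real.norm_natCast]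
  have hΓpos : 0 < Real.Gamma (c + k) := Real.Gamma_pos_of_pos (by linarith)
  calc ‖phi3Term b c w z k m‖
      = ‖(ascPochhammer ℝ k).eval b * w ^ k / k.factorial‖ * ‖z ^ m / m.factorial‖ /
          ‖Real.Gamma (c + k + m)‖ := by rw [phi3Term_eq_div_Gamma, norm_div, norm_mul]
    _ ≤ ((1 + |b|) * |w|) ^ k * ‖z ^ m / m.factorial‖ / Real.Gamma (c + k) := by gcongr
    _ = ((1 + |b|) * |w|) ^ k / Real.Gamma (c + k) * (|z| ^ m / m.factorial) := by
        rw [hZ]; ring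

theorem summable_phi3Row : Summable (phi3Row b c w z) := by
  rw [← summable_nat_add_iff ⌈2 - c⌉₊]
  refine .of_norm_bounded
    (((summable_nat_add_iff ⌈2 - c⌉₊).mpr
      (summable_pow_div_Gamma_add_nat c ((1 + |b|) * |w|))).mul_right
        (∑' m : ℕ, |z| ^ m / m.factorial)) fun k => norm_phi3Row_le b c w z _ ?_
  push_cast
  linarith [Nat.le_ceil (2 - c), k.cast_nonneg (α := ℝ)]

theorem phi3Term_sub_two :
    phi3Term b (c - 2) w z k m = (c - 2 + k + m) * phi3Term b (c - 1) w z k m := by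
  have hc : c - 2 + k + m + 1 = c - 1 + k + m := by ring
  simp only [phi3Term, inv_Gamma_eq_mul_inv_Gamma_add_one (c - 2 + k + m), hc]
  ring

theorem succ_mul_phi3Term_succ_right :
    ((m + 1 : ℕ) : ℝ) * phi3Term b (c - 1) w z k (m + 1) = z * phi3Term b c w z k m := by
  have hc : c - 1 + k + ((m + 1 : ℕ) : ℝ) = c + k + m := by push_cast; ring
  simp only [phi3Term, hc, Nat.factorial_succ, Nat.cast_mul]
  field_simp
  ring

theorem succ_mul_phi3Term_succ_left :
    ((k + 1 : ℕ) : ℝ) * phi3Term (b - 1) (c - 1) w z (k + 1) m =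
      (b - 1) * w * phi3Term b c w z k m := by
  have hc : c - 1 + ((k + 1 : ℕ) : ℝ) + m = c + k + m := by push_cast; ring
  simp only [phi3Term, hc, Nat.factorial_succ, Nat.cast_mul, ascPochhammer_succ_eval_sub_one]
  field_simp
  ring

theorem hasSum_mul_phi3Term :
    HasSum (fun m : ℕ => (m : ℝ) * phi3Term b (c - 1) w z k m) (z * phi3Row b c w z k) := by
  refine hasSum_of_hasSum_nat_succ (by simp) ?_
  have h := (summable_phi3Term b c w z k).hasSum.mul_left z
  simp only [← succ_mul_phi3Term_succ_right] at h
  exact h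

theorem phi3Row_contiguous :
    phi3Row b (c - 2) w z k - (c - 2) * phi3Row b (c - 1) w z k - z * phi3Row b c w z k =
      k * phi3Row b (c - 1) w z k := by
  have h := ((summable_phi3Term b (c - 1) w z k).hasSum.mul_left (c - 2 + k)).add
    (hasSum_mul_phi3Term b c w z k)
  simp only [← add_mul, ← phi3Term_sub_two] at h
  rw [phi3Row, h.tsum_eq]
  unfold phi3Row
  ring

theorem hasSum_mul_phi3Row :
    HasSum (fun k : ℕ => (k : ℝ) * phi3Row (b - 1) (c - 1) w z k)
      ((b - 1) * w * Phi3 b c w z) := by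
  refine hasSum_of_hasSum_nat_succ (by simp) ?_
  have hrow (k : ℕ) : ((k + 1 : ℕ) : ℝ) * phi3Row (b - 1) (c - 1) w z (k + 1) =
      (b - 1) * w * phi3Row b c w z k := by
    simp only [phi3Row, ← tsum_mul_left, succ_mul_phi3Term_succ_left]
  have h := (summable_phi3Row b c w z).hasSum.mul_left ((b - 1) * w)
  simp only [← hrow] at h
  exact h

end

/-- termwise identity underlying the Φ̃₃ recursion (no division needed). -/
theorem phi3_recursion_termwise (b c w z : ℝ) :
    (b - 1) * w * Phi3 b c w z =
      Phi3 (b - 1) (c - 2) w z - (c - 2) * Phi3 (b - 1) (c - 1) w z -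
        z * Phi3 (b - 1) c w z := by
  have h := (((summable_phi3Row (b - 1) (c - 2) w z).hasSum.sub
    ((summable_phi3Row (b - 1) (c - 1) w z).hasSum.mul_left (c - 2))).sub
    ((summable_phi3Row (b - 1) c w z).hasSum.mul_left z))
  simp only [phi3Row_contiguous] at h
  exact (hasSum_mul_phi3Row b c w z).unique h
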